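/- Let G be a finite group that is CD-minimal (1 ∈ CD(G) and G is indecomposable) but not CD-simple (CD(G) ≠ {1, G}). If B is a coatom of CD(G), then C_G(B) ≤ B, B is normal in G, and the index |G : B| is divisible by at least two distinct primes. -/

import Mathlib

/-!
Within `CD(G)` joins are products: comparing `|HK| * |H ⊓ K| = |H| * |K|` and the same identity
for the centralizers with the maximality of the measure at `H ⊔ K` and `H ⊓ K` forces
`|H ⊔ K| = |HK|`. Since `1 ∈ CD(G)`, the maximal measure is `|G|` and `Z(G) = 1`.

For a coatom `B`: if `C_G(B) ⊄ B`, then `B ⊔ C_G(B) = G` with `B ⊓ C_G(B) ≤ Z(G) = 1`, a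
direct decomposition. If `B^g ≠ B`, then `G = B^g B`, and writing `g` in this product shows
`g ∈ B`. Finally `|C_G(B)| = |G : B|`; if this were a power of `p`, a Sylow `p`-subgroup `P` would
satisfy `BP = G` and centralize a nontrivial element of the normal `p`-subgroup `C_G(B)`, which
would then be central.
-/

open Pointwise

/-- The Chermak-Delgado measure of a subgroup: `m_G(H) = |H| * |C_G(H)|`. -/
noncomputable def cdMeasure {G : Type*} [Group G] (H : Subgroup G) : Nat :=
  Nat.card H * Nat.card (Subgroup.centralizer (H : Set G))

/-- The Chermak-Delgado lattice of `G`: the subgroups of maximal Chermak-Delgado measure. -/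
def CD (G : Type*) [Group G] : Set (Subgroup G) :=
  {H | ∀ K : Subgroup G, cdMeasure K ≤ cdMeasure H}

namespace Subgroup

variable {G : Type*} [Group G]

theorem card_image_mk_mul_card_inf (H K : Subgroup G) :
    Nat.card (((↑) : G → G ⧸ K) '' H) * Nat.card ↥(H ⊓ K) = Nat.card H := by
  have hsmul (h : H) : h • ((1 : G) : G ⧸ K) = ((h : G) : G ⧸ K) :=
    congrArg QuotientGroup.mk (mul_one (h : G))
  have horbit : MulAction.orbit H ((1 : G) : G ⧸ K) = ((↑) : G → G ⧸ K) '' H := by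
    ext q
    simp [MulAction.mem_orbit_iff, hsmul]
  have hstab : MulAction.stabilizer H ((1 : G) : G ⧸ K) = (H ⊓ K).subgroupOf H := by
    ext h
    simp [hsmul, QuotientGroup.eq, mem_subgroupOf]
  rw [← Nat.card_congr (MulAction.orbitProdStabilizerEquivGroup H ((1 : G) : G ⧸ K)),
    Nat.card_prod, horbit, hstab,
    Nat.card_congr (subgroupOfEquivOfLe inf_le_left).toEquiv]

theorem card_mul_mul_card_inf (H K : Subgroup G) :
    Nat.card ((H : Set G) * K : Set G) * Nat.card ↥(H ⊓ K) = Nat.card H * Nat.card K := by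
  rw [card_mul_eq_card_subgroup_mul_card_quotient, mul_assoc, card_image_mk_mul_card_inf, mul_comm]

theorem centralizer_sup (H K : Subgroup G) :
    centralizer ((H ⊔ K : Subgroup G) : Set G) =
      centralizer (H : Set G) ⊓ centralizer (K : Set G) := by
  rw [sup_eq_closure, centralizer_closure]
  exact SetLike.coe_injective Set.centralizer_union

theorem le_centralizer_centralizer (H : Subgroup G) :
    H ≤ centralizer (centralizer (H : Set G) : Set G) :=
  le_centralizer_iff.mp le_rfl

theorem inf_centralizer_le_center {H : Subgroup G} (h : H ⊔ centralizer (H : Set G) = ⊤) :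
    H ⊓ centralizer (H : Set G) ≤ center G := by
  have hcenter : centralizer ((H ⊔ centralizer (H : Set G) : Subgroup G) : Set G) = center G := by
    rw [h, coe_top, centralizer_univ]
  rw [← hcenter, centralizer_sup, inf_comm]
  exact inf_le_inf_left _ (le_centralizer_centralizer H)

theorem mul_subset_of_le {H K L : Subgroup G} (hH : H ≤ L) (hK : K ≤ L) :
    (H : Set G) * K ⊆ L :=
  (Set.mul_subset_mul (SetLike.coe_subset_coe.mpr hH) (SetLike.coe_subset_coe.mpr hK)).trans
    (coe_mul_coe L).subset

theorem centralizer_map_equiv {G' : Type*} [Group G'] (e : G ≃* G') (H : Subgroup G) :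
    centralizer ((H.map e.toMonoidHom : Subgroup G') : Set G') =
      (centralizer (H : Set G)).map e.toMonoidHom := by
  ext x
  simp [mem_centralizer_iff, map_equiv_eq_comap_symm, ← e.symm.injective.eq_iff,
    e.surjective.forall]

theorem mem_of_mem_map_conj_mul {H : Subgroup G} {g : G}
    (hg : g ∈ (H.map (MulAut.conj g).toMonoidHom : Set G) * H) : g ∈ H := by
  obtain ⟨-, ⟨h, hh, rfl⟩, k, hk, hgk⟩ := hg
  simp only [MulEquiv.toMonoidHom_eq_coe, MonoidHom.coe_coe, MulAut.conj_apply] at hgk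
  have : g = k * h := by
    rw [eq_inv_mul_iff_mul_eq.mpr hgk]
    group
  exact this ▸ mul_mem hk hh

theorem normal_of_sup_centralizer_eq_top {H : Subgroup G}
    (h : H ⊔ centralizer (H : Set G) = ⊤) : H.Normal :=
  normalizer_eq_top_iff.mp <| top_le_iff.mp <|
    h ▸ sup_le le_normalizer (centralizer_le_normalizer _)

theorem sup_sylow_eq_top_of_index_eq_prime_pow [Finite G] {p k : ℕ} [Fact p.Prime]
    (P : Sylow p G) {H : Subgroup G} (hH : H.index = p ^ k) : H ⊔ P = ⊤ :=
  index_eq_one.mp <| Nat.eq_one_of_dvd_coprimes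
    (Nat.Coprime.pow_left k ((Nat.Prime.coprime_iff_not_dvd Fact.out).mpr P.not_dvd_index))
    (hH ▸ index_dvd_of_le le_sup_left) (index_dvd_of_le le_sup_right)

end Subgroup

theorem IsPGroup.inf_centralizer_ne_bot {G : Type*} [Group G] [Finite G] {p : ℕ} [Fact p.Prime]
    {P : Subgroup G} (hP : IsPGroup p P) {N : Subgroup G} [N.Normal] (hN : p ∣ Nat.card N) :
    N ⊓ Subgroup.centralizer (P : Set G) ≠ ⊥ := by
  let _ : MulAction P N := MulAction.compHom N (ConjAct.toConjAct.toMonoidHom.comp P.subtype)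
  obtain ⟨z, hz, hz1⟩ := hP.exists_fixed_point_of_prime_dvd_card_of_fixed_point N hN
    (a := 1) (fun x => smul_one (ConjAct.toConjAct (x : G)))
  have hz_mem : (z : G) ∈ N ⊓ Subgroup.centralizer (P : Set G) :=
    ⟨z.2, fun x hx => mul_inv_eq_iff_eq_mul.mp (congrArg Subtype.val (hz ⟨x, hx⟩))⟩
  exact fun hbot => hz1 (Subtype.ext ((Subgroup.eq_bot_iff_forall _).mp hbot z hz_mem).symm)

theorem Nat.exists_prime_ne_dvd_of_not_isPrimePow {n : ℕ} (hn : n ≠ 1) (h : ¬ IsPrimePow n) :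
    ∃ p q : ℕ, p.Prime ∧ q.Prime ∧ p ≠ q ∧ p ∣ n ∧ q ∣ n := by
  obtain ⟨p, hp, hpn⟩ := Nat.exists_prime_and_dvd hn
  rw [isPrimePow_iff_unique_prime_dvd] at h
  by_contra! hne
  exact h ⟨p, ⟨hp, hpn⟩, fun q hq => by_contra fun hqp =>
    hne p q hp hq.1 (Ne.symm hqp) hpn hq.2⟩

open Subgroup

theorem not_isPrimePow_index_of_card_centralizer_eq_index {G : Type*} [Group G] [Finite G]
    (hZ : center G = ⊥) {H : Subgroup G} [H.Normal]
    (hC : Nat.card (centralizer (H : Set G)) = H.index) : ¬ IsPrimePow H.index := by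
  rintro ⟨p, k, hp, hk, hpk⟩
  have := Fact.mk (Nat.prime_iff.mpr hp)
  obtain ⟨P⟩ : Nonempty (Sylow p G) := inferInstance
  have hZP : centralizer (H : Set G) ⊓ centralizer ((P : Subgroup G) : Set G) = ⊥ := by
    rw [← centralizer_sup, sup_sylow_eq_top_of_index_eq_prime_pow P hpk.symm, coe_top,
      centralizer_univ, hZ]
  exact P.isPGroup'.inf_centralizer_ne_bot (hC ▸ hpk ▸ dvd_pow_self p hk.ne') hZP

section CD

variable {G : Type*} [Group G]

theorem cdMeasure_map_equiv {G' : Type*} [Group G'] (e : G ≃* G') (H : Subgroup G) :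
    cdMeasure (H.map e.toMonoidHom) = cdMeasure H := by
  rw [cdMeasure, cdMeasure, centralizer_map_equiv, card_map_of_injective e.injective,
    card_map_of_injective e.injective]

theorem map_mem_CD {G' : Type*} [Group G'] (e : G ≃* G') {H : Subgroup G} (hH : H ∈ CD G) :
    H.map e.toMonoidHom ∈ CD G' := fun K =>
  calc cdMeasure K = cdMeasure (K.map e.symm.toMonoidHom) := (cdMeasure_map_equiv e.symm K).symm
    _ ≤ cdMeasure H := hH _
    _ = cdMeasure (H.map e.toMonoidHom) := (cdMeasure_map_equiv e H).symm

theorem mem_CD_of_le {H K : Subgroup G} (hH : H ∈ CD G) (h : cdMeasure H ≤ cdMeasure K) :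
    K ∈ CD G :=
  fun X => (hH X).trans h

theorem cdMeasure_eq_of_mem_CD {H K : Subgroup G} (hH : H ∈ CD G) (hK : K ∈ CD G) :
    cdMeasure H = cdMeasure K :=
  le_antisymm (hK H) (hH K)

theorem centralizer_mem_CD [Finite G] {H : Subgroup G} (hH : H ∈ CD G) :
    centralizer (H : Set G) ∈ CD G :=
  mem_CD_of_le hH <| by
    rw [cdMeasure, cdMeasure, mul_comm]
    exact Nat.mul_le_mul_left _ (card_le_of_le (le_centralizer_centralizer H))

theorem cdMeasure_bot : cdMeasure (⊥ : Subgroup G) = Nat.card G := by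
  rw [cdMeasure, coe_bot, centralizer_eq_top_iff_subset.mpr (by simp [one_mem]), card_bot,
    card_top, one_mul]

theorem cdMeasure_top : cdMeasure (⊤ : Subgroup G) = Nat.card G * Nat.card (center G) := by
  rw [cdMeasure, coe_top, centralizer_univ, card_top]

theorem center_eq_bot_of_bot_mem_CD [Finite G] (h : ⊥ ∈ CD G) : center G = ⊥ := by
  have := h ⊤
  rw [cdMeasure_top, cdMeasure_bot] at this
  exact eq_bot_of_card_le _ (by simpa using this)

theorem top_mem_CD_of_bot_mem_CD [Finite G] (h : ⊥ ∈ CD G) : ⊤ ∈ CD G :=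
  mem_CD_of_le h <| by
    rw [cdMeasure_top, cdMeasure_bot, center_eq_bot_of_bot_mem_CD h, card_bot, mul_one]

theorem card_centralizer_eq_index_of_mem_CD [Finite G] (hbot : ⊥ ∈ CD G) {H : Subgroup G}
    (hH : H ∈ CD G) : Nat.card (centralizer (H : Set G)) = H.index := by
  have hmeasure : cdMeasure H = cdMeasure (⊥ : Subgroup G) := cdMeasure_eq_of_mem_CD hH hbot
  rw [cdMeasure_bot, cdMeasure, ← card_mul_index H] at hmeasure
  exact Nat.eq_of_mul_eq_mul_left Nat.card_pos hmeasure

theorem cdMeasure_pos [Finite G] (H : Subgroup G) : 0 < cdMeasure H :=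
  Nat.mul_pos Nat.card_pos Nat.card_pos

theorem sup_mem_CD_and_coe_sup_eq_mul [Finite G] {H K : Subgroup G} (hH : H ∈ CD G)
    (hK : K ∈ CD G) : H ⊔ K ∈ CD G ∧ ((H ⊔ K : Subgroup G) : Set G) = H * K := by
  set m := cdMeasure H
  set CH := centralizer (H : Set G)
  set CK := centralizer (K : Set G)
  have hHK_sub : (H : Set G) * K ⊆ (H ⊔ K : Subgroup G) :=
    mul_subset_of_le le_sup_left le_sup_right
  have hC_sub : (CH : Set G) * CK ⊆ centralizer ((H ⊓ K : Subgroup G) : Set G) :=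
    mul_subset_of_le (centralizer_le inf_le_left) (centralizer_le inf_le_right)
  set a := Nat.card ((H : Set G) * K : Set G)
  set e := Nat.card ((CH : Set G) * CK : Set G)
  set S := Nat.card ↥(H ⊔ K)
  set c := Nat.card (centralizer ((H ⊓ K : Subgroup G) : Set G))
  set b := Nat.card ↥(H ⊓ K)
  set f := Nat.card (centralizer ((H ⊔ K : Subgroup G) : Set G))
  have haS : a ≤ S := Nat.card_mono (Set.toFinite _) hHK_sub
  have hec : e ≤ c := Nat.card_mono (Set.toFinite _) hC_sub
  have hbf_pos : 0 < b * f := Nat.mul_pos Nat.card_pos Nat.card_pos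
  have hprod : (a * e) * (b * f) = m * m := by
    have hab : a * b = Nat.card H * Nat.card K := card_mul_mul_card_inf H K
    have hef : e * f = Nat.card CH * Nat.card CK := by
      simp only [e, f, centralizer_sup]
      exact card_mul_mul_card_inf CH CK
    calc (a * e) * (b * f) = (a * b) * (e * f) := by ring
      _ = cdMeasure H * cdMeasure K := by rw [hab, hef, cdMeasure, cdMeasure]; ring
      _ = m * m := by rw [cdMeasure_eq_of_mem_CD hK hH]
  have hSf_bc : (S * f) * (b * c) = m * m := by
    refine le_antisymm (Nat.mul_le_mul (hH _) (hH _)) ?_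
    calc m * m = (a * e) * (b * f) := hprod.symm
      _ ≤ (S * c) * (b * f) := Nat.mul_le_mul_right _ (Nat.mul_le_mul haS hec)
      _ = (S * f) * (b * c) := by ring
  have hSf : S * f = m := ((mul_eq_mul_iff_eq_and_eq_of_pos' (hH _) (hH _) (cdMeasure_pos H)
    (cdMeasure_pos _)).mp hSf_bc).1
  have hae : a * e = S * c :=
    Nat.eq_of_mul_eq_mul_right hbf_pos (hprod.trans (by rw [← hSf_bc]; ring))
  have ha_pos : 0 < a := (Set.natCard_pos (Set.toFinite _)).mpr
    ⟨1 * 1, Set.mul_mem_mul (one_mem H) (one_mem K)⟩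
  have haS_eq : a = S := ((mul_eq_mul_iff_eq_and_eq_of_pos haS hec ha_pos Nat.card_pos).mp hae).1
  refine ⟨mem_CD_of_le hH hSf.ge,
    (Set.eq_of_subset_of_ncard_le hHK_sub ?_ (Set.toFinite _)).symm⟩
  rw [← Nat.card_coe_set_eq, ← Nat.card_coe_set_eq, SetLike.coe_sort_coe]
  exact haS_eq.ge

end CD

section Coatom

variable {G : Type*} [Group G] [Finite G] {B : Subgroup G}

theorem ne_bot_of_isCoatom_CD (hbot : ⊥ ∈ CD G) (hnotsimple : CD G ≠ {⊥, ⊤})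
    (hmax : ∀ X ∈ CD G, X ≠ ⊤ → B ≤ X → X = B) : B ≠ ⊥ := by
  rintro rfl
  refine hnotsimple (Set.Subset.antisymm (fun X hX => ?_) ?_)
  · by_cases hXt : X = ⊤
    · exact Or.inr hXt
    · exact Or.inl (hmax X hX hXt bot_le)
  · exact Set.insert_subset_iff.mpr
      ⟨hbot, Set.singleton_subset_iff.mpr (top_mem_CD_of_bot_mem_CD hbot)⟩

theorem centralizer_le_of_isCoatom_CD (hbot : ⊥ ∈ CD G)
    (hindec : ¬ ∃ H K : Subgroup G, H ≠ ⊥ ∧ K ≠ ⊥ ∧ H.Normal ∧ K.Normal ∧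
      H ⊓ K = ⊥ ∧ H ⊔ K = ⊤)
    (hB : B ∈ CD G) (hB_ne_bot : B ≠ ⊥)
    (hmax : ∀ X ∈ CD G, X ≠ ⊤ → B ≤ X → X = B) :
    centralizer (B : Set G) ≤ B := by
  by_contra hCB
  have hsup : B ⊔ centralizer (B : Set G) = ⊤ := by
    by_contra hne
    have hBC := (sup_mem_CD_and_coe_sup_eq_mul hB (centralizer_mem_CD hB)).1
    exact hCB (le_sup_right.trans (hmax _ hBC hne le_sup_left).le)
  have hBn := normal_of_sup_centralizer_eq_top hsup
  refine hindec ⟨B, centralizer (B : Set G), hB_ne_bot, fun h => hCB (h ▸ bot_le), hBn,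
    inferInstance, ?_, hsup⟩
  exact le_bot_iff.mp (center_eq_bot_of_bot_mem_CD hbot ▸ inf_centralizer_le_center hsup)

theorem normal_of_isCoatom_CD (hB : B ∈ CD G)
    (hmax : ∀ X ∈ CD G, X ≠ ⊤ → B ≤ X → X = B) : B.Normal := by
  refine normalizer_eq_top_iff.mp <|
    eq_top_iff.mpr fun g _ => mem_normalizer_iff_map_conj_eq.mpr ?_
  have hD : B.map (MulAut.conj g).toMonoidHom ∈ CD G := map_mem_CD _ hB
  obtain ⟨hDB, hDB_eq⟩ := sup_mem_CD_and_coe_sup_eq_mul hD hB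
  by_cases htop : B.map (MulAut.conj g).toMonoidHom ⊔ B = ⊤
  · have hg : g ∈ B := mem_of_mem_map_conj_mul (by rw [← hDB_eq, htop]; trivial)
    exact mem_normalizer_iff_map_conj_eq.mp (le_normalizer hg)
  · exact eq_of_le_of_card_ge (le_sup_left.trans (hmax _ hDB htop le_sup_right).le)
      (card_map_of_injective (MulAut.conj g).injective).ge

end Coatom

theorem stmt15 {G : Type*} [Group G] [Fintype G]
    (hbot : (⊥ : Subgroup G) ∈ CD G)
    (hindec : ¬ ∃ H K : Subgroup G, H ≠ ⊥ ∧ K ≠ ⊥ ∧ H.Normal ∧ K.Normal ∧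
        H ⊓ K = ⊥ ∧ H ⊔ K = ⊤)
    (hnotsimple : CD G ≠ {⊥, ⊤})
    (B : Subgroup G)
    (hB : B ∈ CD G ∧ B ≠ ⊤ ∧ ∀ X ∈ CD G, X ≠ ⊤ → B ≤ X → X = B) :
    Subgroup.centralizer (B : Set G) ≤ B ∧ B.Normal ∧
      ∃ p q : Nat, p.Prime ∧ q.Prime ∧ p ≠ q ∧ p ∣ B.index ∧ q ∣ B.index := by
  obtain ⟨hBCD, hBtop, hmax⟩ := hB
  have hBn : B.Normal := normal_of_isCoatom_CD hBCD hmax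
  refine ⟨centralizer_le_of_isCoatom_CD hbot hindec hBCD
    (ne_bot_of_isCoatom_CD hbot hnotsimple hmax) hmax, hBn, ?_⟩
  refine Nat.exists_prime_ne_dvd_of_not_isPrimePow (mt index_eq_one.mp hBtop) ?_
  exact not_isPrimePow_index_of_card_centralizer_eq_index (center_eq_bot_of_bot_mem_CD hbot)
    (card_centralizer_eq_index_of_mem_CD hbot hBCD)
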